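/- arXiv:1212.1670 — 3 statements merged into one kernel-verified Lean document; each statement's English description precedes it below -/
import Mathlib

section
/- For ε ∈ (0, 1/2) and ψ(t) = ε³/(t − ε + 1)³ for t ≥ ε, the following bound holds: ∫_ε^∞ √( ψ(t) / (t − ψ(t)) ) dt ≤ 2ε · ∫_0^∞ du / √(4(u+1)³ − 1), and in particular the left-hand integral is finite and bounded by C·ε for an absolute constant C. -/
open Real Set MeasureTheory

private lemma integrableOn_comp_add_right_Ioi (f : ℝ → ℝ) (a c : ℝ) :
    IntegrableOn (fun x => f (x + c)) (Ioi a) ↔ IntegrableOn f (Ioi (a + c)) := by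
  have h := (measurePreserving_add_right (volume : Measure ℝ) c).integrableOn_comp_preimage
    (MeasurableEquiv.addRight c).measurableEmbedding (f := f) (s := Ioi (a + c))
  have hpre : ((· + c) : ℝ → ℝ) ⁻¹' Ioi (a + c) = Ioi a := by
    ext x; simp [mem_Ioi]
  rw [hpre] at h
  exact h

private lemma setIntegral_comp_add_right_Ioi (f : ℝ → ℝ) (a c : ℝ) :
    ∫ x in Ioi a, f (x + c) = ∫ x in Ioi (a + c), f x := by
  have h := (measurePreserving_add_right (volume : Measure ℝ) c).setIntegral_preimage_emb
    (MeasurableEquiv.addRight c).measurableEmbedding f (Ioi (a + c))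
  have hpre : ((· + c) : ℝ → ℝ) ⁻¹' Ioi (a + c) = Ioi a := by
    ext x; simp [mem_Ioi]
  rw [hpre] at h
  exact h

private lemma g_integrable : IntegrableOn
    (fun u : ℝ => 1 / Real.sqrt (4 * (u + 1) ^ 3 - 1)) (Ioi 0) := by
  have hbound : IntegrableOn (fun u : ℝ => (u + 1) ^ (-(3/2) : ℝ)) (Ioi 0) := by
    have h1 : IntegrableOn (fun x : ℝ => x ^ (-(3/2) : ℝ)) (Ioi 1) :=
      integrableOn_Ioi_rpow_of_lt (by norm_num) one_pos
    have := (integrableOn_comp_add_right_Ioi (fun x : ℝ => x ^ (-(3/2) : ℝ)) 0 1)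
    rw [zero_add] at this
    exact this.mpr h1
  refine hbound.integrable.mono' ?_ ?_
  · apply Measurable.aestronglyMeasurable
    fun_prop
  · filter_upwards [ae_restrict_mem measurableSet_Ioi] with u hu
    have hu0 : (0:ℝ) < u := hu
    have h3 : (0:ℝ) < (u + 1) ^ 3 := by positivity
    have heq : (u+1:ℝ) ^ (-(3/2):ℝ) = 1 / Real.sqrt ((u+1)^3) := by
      rw [Real.sqrt_eq_rpow, ← Real.rpow_natCast (u+1) 3, ← Real.rpow_mul (by linarith),
        Real.rpow_neg (by linarith), one_div]
      norm_num
    rw [Real.norm_eq_abs, abs_of_nonneg (by positivity), heq]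
    apply one_div_le_one_div_of_le (Real.sqrt_pos.mpr h3)
    have h1 : (1:ℝ) ≤ (u + 1) ^ 3 := one_le_pow₀ (by linarith)
    exact Real.sqrt_le_sqrt (by nlinarith)

/-- The integral bound for the time-delay function of the equi-filtration
coupling: `∫_ε^∞ √(ψ(t)/(t−ψ(t))) dt ≤ 2ε ∫_0^∞ du/√(4(u+1)³−1)`, the
left-hand integral being finite. -/
theorem stmt_5 (ε : ℝ) (hε : ε ∈ Set.Ioo (0 : ℝ) (1 / 2)) :
    letI ψ : ℝ → ℝ := fun t => ε ^ 3 / (t - ε + 1) ^ 3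
    MeasureTheory.IntegrableOn (fun t => Real.sqrt (ψ t / (t - ψ t))) (Set.Ioi ε) ∧
    ∫ t in Set.Ioi ε, Real.sqrt (ψ t / (t - ψ t))
      ≤ 2 * ε * ∫ u in Set.Ioi (0 : ℝ), 1 / Real.sqrt (4 * (u + 1) ^ 3 - 1) := by
  set ψ : ℝ → ℝ := fun t => ε ^ 3 / (t - ε + 1) ^ 3 with hψ
  obtain ⟨hε0, hε2⟩ := hε
  set g : ℝ → ℝ := fun u => 1 / Real.sqrt (4 * (u + 1) ^ 3 - 1) with hg
  set f : ℝ → ℝ := fun t => Real.sqrt (ψ t / (t - ψ t)) with hf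
  have h2ε : (0:ℝ) < 2 * ε := by linarith
  -- pointwise bound
  have key : ∀ t ∈ Ioi ε, f t ≤ g ((t - ε) / (2 * ε)) := by
    intro t ht
    have hs : 0 < t - ε := sub_pos.mpr ht
    have hden : (0:ℝ) < (t - ε + 1) ^ 3 := by positivity
    have hψpos : 0 < ψ t := by positivity
    have hu1 : (1:ℝ) < (t - ε) / (2 * ε) + 1 := by
      have := div_pos hs h2ε; linarith
    have hA : (3:ℝ) < 4 * ((t - ε) / (2 * ε) + 1) ^ 3 - 1 := by
      have := one_lt_pow₀ hu1 (three_ne_zero)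
      linarith
    have hApos : (0:ℝ) < 4 * ((t - ε) / (2 * ε) + 1) ^ 3 - 1 := by linarith
    -- key algebraic inequality : t / ψ t ≥ 4 (u+1)^3
    have hkey : (4 * ((t - ε) / (2 * ε) + 1) ^ 3) * ψ t ≤ t := by
      show (4 * ((t - ε) / (2 * ε) + 1) ^ 3) * (ε ^ 3 / (t - ε + 1) ^ 3) ≤ t
      have heq : 4 * ((t - ε) / (2 * ε) + 1) ^ 3 * (ε ^ 3 / (t - ε + 1) ^ 3)
          = (t + ε) ^ 3 / (2 * (t - ε + 1) ^ 3) := by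
        field_simp
        ring
      rw [heq, div_le_iff₀ (by positivity)]
      have ht0 : 0 < t := lt_trans hε0 ht
      have c1 : (t + ε) ^ 3 ≤ 2 * t * (t + ε) ^ 2 := by nlinarith [sq_nonneg (t + ε)]
      have c2 : (t + ε) ^ 2 ≤ (t - ε + 1) ^ 2 := by nlinarith
      have c3 : (t - ε + 1) ^ 2 ≤ (t - ε + 1) ^ 3 := by nlinarith
      calc (t + ε) ^ 3 ≤ 2 * t * (t + ε) ^ 2 := c1
        _ ≤ 2 * t * (t - ε + 1) ^ 2 := by nlinarith
        _ ≤ 2 * t * (t - ε + 1) ^ 3 := by nlinarith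
        _ = t * (2 * (t - ε + 1) ^ 3) := by ring
    have htψ : ψ t * (4 * ((t - ε) / (2 * ε) + 1) ^ 3 - 1) ≤ t - ψ t := by nlinarith
    have htψpos : 0 < t - ψ t := lt_of_lt_of_le (by nlinarith) htψ
    have hdiv : ψ t / (t - ψ t) ≤ 1 / (4 * ((t - ε) / (2 * ε) + 1) ^ 3 - 1) := by
      rw [div_le_div_iff₀ htψpos hApos]
      nlinarith
    calc f t ≤ Real.sqrt (1 / (4 * ((t - ε) / (2 * ε) + 1) ^ 3 - 1)) :=
          Real.sqrt_le_sqrt hdiv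
      _ = g ((t - ε) / (2 * ε)) := by
          simp only [hg, one_div, Real.sqrt_inv]
  -- integrability of the comparison function
  have hGeq : (fun t : ℝ => g ((2 * ε)⁻¹ * t + -(1/2))) = fun t => g ((t - ε) / (2 * ε)) := by
    funext t
    congr 1
    field_simp
    ring
  have hhint : IntegrableOn (fun t => g ((t - ε) / (2 * ε))) (Ioi ε) := by
    rw [← hGeq]
    rw [integrableOn_Ioi_comp_mul_left_iff (fun x => g (x + -(1/2))) ε (inv_pos.mpr h2ε)]
    have h12 : (2 * ε)⁻¹ * ε = 1/2 := by field_simp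
    rw [h12]
    have := integrableOn_comp_add_right_Ioi g (1/2) (-(1/2))
    rw [show (1/2 + -(1/2) : ℝ) = 0 by norm_num] at this
    exact this.mpr g_integrable
  -- integrability of f
  have hfmeas : AEStronglyMeasurable f (volume.restrict (Ioi ε)) := by
    apply Measurable.aestronglyMeasurable
    fun_prop
  have hfint : IntegrableOn f (Ioi ε) := by
    refine hhint.integrable.mono' hfmeas ?_
    filter_upwards [ae_restrict_mem measurableSet_Ioi] with t ht
    rw [Real.norm_eq_abs, abs_of_nonneg (Real.sqrt_nonneg _)]
    exact key t ht
  refine ⟨hfint, ?_⟩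
  -- change of variables for the comparison integral
  have hchange : ∫ t in Ioi ε, g ((t - ε) / (2 * ε)) = 2 * ε * ∫ u in Ioi (0:ℝ), g u := by
    rw [← hGeq]
    rw [integral_comp_mul_left_Ioi (fun x => g (x + -(1/2))) ε (inv_pos.mpr h2ε)]
    have h12 : (2 * ε)⁻¹ * ε = 1/2 := by field_simp
    rw [h12, setIntegral_comp_add_right_Ioi g (1/2) (-(1/2)),
      show (1/2 + -(1/2) : ℝ) = 0 by norm_num, inv_inv, smul_eq_mul]
  calc ∫ t in Ioi ε, f t ≤ ∫ t in Ioi ε, g ((t - ε) / (2 * ε)) :=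
        setIntegral_mono_on hfint hhint measurableSet_Ioi key
    _ = 2 * ε * ∫ u in Ioi (0:ℝ), g u := hchange
end

section
/- Let J : [0,∞) × Ω → [−1,1] be a bounded predictable process, B a standard Brownian motion, and for each M define J^{bb;M} taking values in {−1, +1} by a tracking rule that chooses J^{bb;M} = +1 on an interval when the running integral ∫_0^τ J^{bb;M} du ≤ ∫_0^τ J du and −1 otherwise, with switching only at times of a partition of mesh δ_M. Then for all s in [0,t], |∫_0^s J du − ∫_0^s J^{bb;M} du| ≤ 2 δ_M, where δ_M is the maximal partition interval length intersected with [0,t]. -/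
open Real MeasureTheory intervalIntegral

/-!
Write `E s = ∫₀ˢ J - ∫₀ˢ g` for the tracking error. On a partition interval `[τ_k, τ_{k+1})` the
rule makes `g` the constant `+1` when `E (τ_k) ≥ 0` and `-1` otherwise, while `|J| ≤ 1`, so `E`
is monotone there, moving towards zero (possibly past it) at speed at most `2`. Hence if
`|E (τ_k)| ≤ 2δ` then `|E s| ≤ max |E (τ_k)| (2 (s - τ_k)) ≤ 2δ` on the whole interval, and
induction over the partition points gives the bound everywhere on `[0, t]`.
-/

open Set Filter

lemma abs_add_sub_mul_ite_le {x y L C : ℝ} (hx : |x| ≤ C) (hy : |y| ≤ L) (hL : 2 * L ≤ C) :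
    |x + (y - L * if 0 ≤ x then 1 else -1)| ≤ C := by
  rw [abs_le] at hx hy ⊢
  split_ifs with h <;> constructor <;> linarith

lemma intervalIntegrable_of_abs_le {f : ℝ → ℝ} (hf : Measurable f) {C : ℝ} (hC : ∀ u, |f u| ≤ C)
    (a b : ℝ) : IntervalIntegrable f volume a b :=
  (intervalIntegrable_const (c := C)).mono_fun hf.aestronglyMeasurable
    (.of_forall fun u => by simpa only [norm_eq_abs] using (hC u).trans (le_abs_self C))

noncomputable def trackingError (J g : ℝ → ℝ) (s : ℝ) : ℝ :=
  (∫ u in (0 : ℝ)..s, J u) - ∫ u in (0 : ℝ)..s, g u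

section Tracking

variable {J g : ℝ → ℝ} (hJmeas : Measurable J) (hgmeas : Measurable g)
  (hJ : ∀ u, J u ∈ Icc (-1 : ℝ) 1) (hg : ∀ u, g u = 1 ∨ g u = -1)
include hJmeas hgmeas hJ hg

lemma abs_trackingError_le_of_mem_Icc {a b s C : ℝ} (hs : s ∈ Icc a b)
    (hrule : ∀ u ∈ Ico a b, g u = if 0 ≤ trackingError J g a then 1 else -1)
    (ha : |trackingError J g a| ≤ C) (hsa : 2 * (s - a) ≤ C) :
    |trackingError J g s| ≤ C := by
  have hJint := intervalIntegrable_of_abs_le hJmeas fun u => abs_le.2 (hJ u)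
  have hgint := intervalIntegrable_of_abs_le hgmeas (C := 1) fun u => by
    rcases hg u with h | h <;> simp [h]
  have hJs : |∫ u in a..s, J u| ≤ s - a := by
    simpa [abs_of_nonneg (sub_nonneg.2 hs.1)] using
      norm_integral_le_of_norm_le_const (a := a) (b := s) (C := 1)
        fun u _ => (norm_eq_abs (J u)).trans_le (abs_le.2 (hJ u))
  have hgs : ∫ u in a..s, g u = (s - a) * if 0 ≤ trackingError J g a then 1 else -1 := by
    rw [integral_congr_uIoo (g := fun _ => _), intervalIntegral.integral_const, smul_eq_mul]
    intro u hu
    rw [uIoo_of_le hs.1] at hu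
    exact hrule u ⟨hu.1.le, hu.2.trans_le hs.2⟩
  have hsplit : trackingError J g s =
      trackingError J g a + ((∫ u in a..s, J u) - ∫ u in a..s, g u) := by
    rw [← integral_interval_sub_left (hJint 0 s) (hJint 0 a),
      ← integral_interval_sub_left (hgint 0 s) (hgint 0 a), trackingError, trackingError]
    ring
  rw [hsplit, hgs]
  exact abs_add_sub_mul_ite_le ha hJs hsa

lemma abs_trackingError_le_of_mesh {τ : ℕ → ℝ} (hτ0 : τ 0 = 0) (hτmono : StrictMono τ)
    (hτtop : Tendsto τ atTop atTop)
    (hrule : ∀ k, ∀ u ∈ Ico (τ k) (τ (k + 1)),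
      g u = if 0 ≤ trackingError J g (τ k) then 1 else -1)
    {t C : ℝ} (hmesh : ∀ k, ∀ s ∈ Icc (τ k) (τ (k + 1)), s ≤ t → 2 * (s - τ k) ≤ C)
    {s : ℝ} (hs : s ∈ Icc 0 t) : |trackingError J g s| ≤ C := by
  have hτ01 : (0 : ℝ) ∈ Icc (τ 0) (τ 1) := ⟨hτ0.le, hτ0 ▸ (hτmono Nat.zero_lt_one).le⟩
  have hC : 0 ≤ C := by simpa [hτ0] using hmesh 0 0 hτ01 (hs.1.trans hs.2)
  have hnode : ∀ k, τ k ≤ t → |trackingError J g (τ k)| ≤ C := by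
    intro k
    induction k with
    | zero => intro; simpa [hτ0, trackingError] using hC
    | succ k ih =>
      intro hk
      have hlt := hτmono k.lt_succ_self
      exact abs_trackingError_le_of_mem_Icc hJmeas hgmeas hJ hg ⟨hlt.le, le_rfl⟩ (hrule k)
        (ih (hlt.le.trans hk)) (hmesh k _ ⟨hlt.le, le_rfl⟩ hk)
  obtain ⟨k, hk⟩ : ∃ k, s ∈ Icc (τ k) (τ (k + 1)) := by
    rcases hs.1.eq_or_lt with rfl | hpos
    · exact ⟨0, hτ01⟩
    · obtain ⟨k, h₁, h₂⟩ := hτmono.exists_between_of_tendsto_atTop hτtop (hτ0 ▸ hpos)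
      exact ⟨k, h₁.le, h₂⟩
  exact abs_trackingError_le_of_mem_Icc hJmeas hgmeas hJ hg hk (hrule k)
    (hnode k (hk.1.trans hs.2)) (hmesh k s hk hs.2)

end Tracking

theorem stmt_12_general (t δ : ℝ) (J g : ℝ → ℝ)
    (hJmeas : Measurable J) (hgmeas : Measurable g)
    (hJ : ∀ u, J u ∈ Set.Icc (-1 : ℝ) 1)
    (hg : ∀ u, g u = 1 ∨ g u = -1)
    (τ : ℕ → ℝ) (hτ0 : τ 0 = 0) (hτmono : StrictMono τ)
    (hτtop : Filter.Tendsto τ Filter.atTop Filter.atTop)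
    (htrack : ∀ k, ∀ u ∈ Set.Ico (τ k) (τ (k + 1)),
      g u = if (∫ x in (0 : ℝ)..(τ k), g x) ≤ ∫ x in (0 : ℝ)..(τ k), J x then 1 else -1)
    (hδ : ∀ k, min (τ (k + 1)) t - min (τ k) t ≤ δ) :
    ∀ s ∈ Set.Icc (0 : ℝ) t,
      |(∫ u in (0 : ℝ)..s, J u) - ∫ u in (0 : ℝ)..s, g u| ≤ 2 * δ := by
  intro s hs
  have hrule : ∀ k, ∀ u ∈ Ico (τ k) (τ (k + 1)),
      g u = if 0 ≤ trackingError J g (τ k) then 1 else -1 := by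
    intro k u hu
    simp only [htrack k u hu, trackingError, sub_nonneg]
  have hmesh : ∀ k, ∀ s ∈ Icc (τ k) (τ (k + 1)), s ≤ t → 2 * (s - τ k) ≤ 2 * δ := by
    intro k s hs hst
    have hδk := hδ k
    rw [min_eq_left (hs.1.trans hst)] at hδk
    linarith [le_min hs.2 hst]
  exact abs_trackingError_le_of_mesh hJmeas hgmeas hJ hg hτ0 hτmono hτtop hrule hmesh hs

/-- Deterministic tracking bound for the bang-bang approximation: if
`J : ℝ → [−1,1]` and `g` is the `{±1}`-valued function which is constant on
the intervals of a partition `τ`, taking value `+1` on `[τ_k, τ_{k+1})` when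
`∫_0^{τ_k} g ≤ ∫_0^{τ_k} J` and `−1` otherwise, then for all `s ∈ [0,t]`
`|∫_0^s J − ∫_0^s g| ≤ 2δ` where `δ` bounds the partition mesh within `[0,t]`. -/
theorem stmt_12 (t δ : ℝ) (ht : 0 < t) (J g : ℝ → ℝ)
    (hJmeas : Measurable J) (hgmeas : Measurable g)
    (hJ : ∀ u, J u ∈ Set.Icc (-1 : ℝ) 1)
    (hg : ∀ u, g u = 1 ∨ g u = -1)
    (τ : ℕ → ℝ) (hτ0 : τ 0 = 0) (hτmono : StrictMono τ)
    (hτtop : Filter.Tendsto τ Filter.atTop Filter.atTop)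
    (htrack : ∀ k, ∀ u ∈ Set.Ico (τ k) (τ (k + 1)),
      g u = if (∫ x in (0 : ℝ)..(τ k), g x) ≤ ∫ x in (0 : ℝ)..(τ k), J x then 1 else -1)
    (hδ : ∀ k, min (τ (k + 1)) t - min (τ k) t ≤ δ) :
    ∀ s ∈ Set.Icc (0 : ℝ) t,
      |(∫ u in (0 : ℝ)..s, J u) - ∫ u in (0 : ℝ)..s, g u| ≤ 2 * δ :=
  stmt_12_general t δ J g hJmeas hgmeas hJ hg τ hτ0 hτmono hτtop htrack hδ
end

section
/- For α ≥ 0 and b > 0, the function α ↦ 1 + sinh(√(α/2)·b)·log(tanh(√(α/2)·b/2)) takes values in [0,1], tends to 1 as α → 0⁺, and tends to 0 as α → ∞. -/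
/-!
Since `tanh (x / 2) = sinh x / (cosh x + 1)`, one finds `log (tanh (x / 2)) = -arsinh t` with
`t = (sinh x)⁻¹`, so for `x > 0` the transform equals `1 - arsinh t / t`. The bounds
`0 ≤ arsinh t ≤ t` place it in `[0, 1]`, and `arsinh' 0 = 1` sends it to `0` as `x → ∞`
(i.e. `t → 0⁺`). The same identity rewrites it as `1 + sinh x log (sinh x) - sinh x log (cosh x + 1)`,
which is continuous with value `1` at `x = 0`.
-/

open Real Filter Topology

theorem Real.tanh_half (x : ℝ) : tanh (x / 2) = sinh x / (cosh x + 1) := by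
  obtain ⟨y, rfl⟩ : ∃ y, x = 2 * y := ⟨x / 2, by ring⟩
  have hc : cosh y ≠ 0 := (cosh_pos y).ne'
  rw [mul_div_cancel_left₀ y two_ne_zero, tanh_eq_sinh_div_cosh, sinh_two_mul, cosh_two_mul,
    cosh_sq y]
  field_simp
  linear_combination (-2 * sinh y) * cosh_sq y

theorem Real.log_tanh_half {x : ℝ} (hx : 0 < x) : log (tanh (x / 2)) = -arsinh (sinh x)⁻¹ := by
  have hs : 0 < sinh x := sinh_pos_iff.2 hx
  have ht : 0 < tanh (x / 2) := by rw [tanh_half]; positivity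
  rw [← arsinh_sinh (log _), ← arsinh_neg, sinh_log ht, tanh_half]
  congr 1
  field_simp
  linear_combination -cosh_sq x

theorem Real.arsinh_le_self {t : ℝ} (ht : 0 ≤ t) : arsinh t ≤ t := by
  simpa [sinh_arsinh] using (self_le_sinh_iff (x := arsinh t)).2 (arsinh_nonneg_iff.2 ht)

theorem Real.tendsto_inv_mul_arsinh_nhdsGT_zero :
    Tendsto (fun t => t⁻¹ * arsinh t) (𝓝[>] 0) (𝓝 1) := by
  simpa using (hasDerivAt_arsinh 0).tendsto_slope_zero_right

theorem Real.tendsto_sinh_atTop : Tendsto sinh atTop atTop :=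
  tendsto_atTop_mono' atTop (eventually_ge_atTop 0 |>.mono fun _ => self_le_sinh_iff.2) tendsto_id

/-- The Laplace transform `E[exp(-α T)]` as a function of `x = √(α / 2) * b`. -/
noncomputable def couplingLaplace (x : ℝ) : ℝ := 1 + sinh x * log (tanh (x / 2))

theorem couplingLaplace_zero : couplingLaplace 0 = 1 := by simp [couplingLaplace]

theorem couplingLaplace_eq_one_sub {x : ℝ} (hx : 0 < x) :
    couplingLaplace x = 1 - sinh x * arsinh (sinh x)⁻¹ := by
  rw [couplingLaplace, log_tanh_half hx]
  ring

theorem couplingLaplace_mem_Icc {x : ℝ} (hx : 0 ≤ x) : couplingLaplace x ∈ Set.Icc 0 1 := by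
  rcases hx.eq_or_lt with rfl | hx
  · simp [couplingLaplace_zero]
  have hs : 0 < sinh x := sinh_pos_iff.2 hx
  have h_nonneg : 0 ≤ sinh x * arsinh (sinh x)⁻¹ :=
    mul_nonneg hs.le (arsinh_nonneg_iff.2 (inv_nonneg.2 hs.le))
  have h_le : sinh x * arsinh (sinh x)⁻¹ ≤ 1 :=
    calc sinh x * arsinh (sinh x)⁻¹ ≤ sinh x * (sinh x)⁻¹ :=
          mul_le_mul_of_nonneg_left (arsinh_le_self (inv_nonneg.2 hs.le)) hs.le
      _ = 1 := mul_inv_cancel₀ hs.ne'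
  rw [couplingLaplace_eq_one_sub hx]
  exact ⟨by linarith, by linarith⟩

theorem couplingLaplace_eq_mul_log_sub (x : ℝ) :
    couplingLaplace x = 1 + (sinh x * log (sinh x) - sinh x * log (cosh x + 1)) := by
  by_cases hs : sinh x = 0
  · simp [couplingLaplace, hs]
  rw [couplingLaplace, tanh_half, log_div hs (by positivity)]
  ring

theorem continuous_couplingLaplace : Continuous couplingLaplace := by
  have hlog : Continuous fun x => log (cosh x + 1) :=
    (by fun_prop : Continuous fun x => cosh x + 1).log fun x => by positivity
  rw [funext couplingLaplace_eq_mul_log_sub]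
  exact continuous_const.add
    ((continuous_mul_log.comp continuous_sinh).sub (continuous_sinh.mul hlog))

theorem tendsto_couplingLaplace_atTop : Tendsto couplingLaplace atTop (𝓝 0) := by
  have h_inv : Tendsto (fun x => (sinh x)⁻¹) atTop (𝓝[>] 0) :=
    tendsto_inv_atTop_nhdsGT_zero.comp tendsto_sinh_atTop
  have h_lim := (tendsto_const_nhds (x := (1 : ℝ))).sub
    (tendsto_inv_mul_arsinh_nhdsGT_zero.comp h_inv)
  rw [sub_self] at h_lim
  refine h_lim.congr' ?_
  filter_upwards [eventually_gt_atTop 0] with x hx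
  simp [couplingLaplace_eq_one_sub hx]

/-- The moment generating function
`α ↦ 1 + sinh(√(α/2) b) log(tanh(√(α/2) b/2))` of the reflection/synchronized
coupling time takes values in `[0,1]`, tends to `1` as `α → 0⁺` and to `0` as
`α → ∞`. -/
theorem stmt_18 (b : ℝ) (hb : 0 < b) :
    letI f : ℝ → ℝ := fun α =>
      1 + Real.sinh (Real.sqrt (α / 2) * b) * Real.log (Real.tanh (Real.sqrt (α / 2) * b / 2))
    (∀ α, 0 ≤ α → f α ∈ Set.Icc (0 : ℝ) 1) ∧
    Filter.Tendsto f (nhdsWithin 0 (Set.Ioi 0)) (nhds 1) ∧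
    Filter.Tendsto f Filter.atTop (nhds 0) := by
  show (∀ α, 0 ≤ α → couplingLaplace (√(α / 2) * b) ∈ Set.Icc 0 1) ∧
    Tendsto (couplingLaplace ∘ fun α => √(α / 2) * b) (𝓝[>] 0) (𝓝 1) ∧
    Tendsto (couplingLaplace ∘ fun α => √(α / 2) * b) atTop (𝓝 0)
  have h_cont : Continuous fun α : ℝ => √(α / 2) * b := by fun_prop
  refine ⟨fun α _ => couplingLaplace_mem_Icc (by positivity), ?_, ?_⟩
  · have h := (continuous_couplingLaplace.comp h_cont).tendsto 0
    simp only [Function.comp_apply, zero_div, sqrt_zero, zero_mul, couplingLaplace_zero] at h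
    exact h.mono_left nhdsWithin_le_nhds
  · exact tendsto_couplingLaplace_atTop.comp
      ((tendsto_sqrt_atTop.comp (tendsto_id.atTop_div_const two_pos)).atTop_mul_const hb)
end
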